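/- Fix h₂, h₃ ∈ ℝ with h₂², h₃² > 0 and P₁ = P₂ = P₃ = P > 0. Suppose h₃² ≥ h₂². With β = 0 and α = γ = 1/2, the simultaneous UL/DL scheme achieves symmetric rate min{(1/2)·C(h₂²P), (1/2)·C⁺(h₂²P − 1/2), (1/2)·C(2h₂²P)} = (1/2)·C⁺(h₂²P − 1/2) whenever h₂²P ≥ 1/2, and this rate is within 1/4 bit of (1/2)·C(h₂²P). -/

import Mathlib

/-! Since `1 + 2x = 2 (1 + (x - 1/2))`, doubling the SNR adds exactly half a bit:
`C (2x) = C (x - 1/2) + 1/2`. Monotonicity of `C` sandwiches `C x` between `C (x - 1/2)` and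
`C (2x)`, which gives both the value of the minimum and the gap of at most `1/4` after halving. -/

noncomputable def C (x : ℝ) : ℝ := (1/2) * Real.logb 2 (1 + x)

noncomputable def Cplus (y : ℝ) : ℝ := max 0 (C y)

lemma C_le_C {x y : ℝ} (hx : -1 < x) (hxy : x ≤ y) : C x ≤ C y := by
  unfold C
  gcongr <;> linarith

lemma C_nonneg {x : ℝ} (hx : 0 ≤ x) : 0 ≤ C x := by
  simpa [C] using C_le_C (by norm_num) hx

lemma Cplus_eq_C {y : ℝ} (hy : 0 ≤ y) : Cplus y = C y :=
  max_eq_right (C_nonneg hy)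

lemma C_two_mul {x : ℝ} (hx : -1/2 < x) : C (2 * x) = C (x - 1/2) + 1/2 := by
  have hfactor : 1 + 2 * x = 2 * (1 + (x - 1/2)) := by ring
  unfold C
  rw [hfactor, Real.logb_mul (by norm_num) (by linarith), Real.logb_self_eq_one (by norm_num)]
  ring

theorem sim_scheme_half_phases_general (P h₂ : ℝ)
    (hsnr : 1/2 ≤ h₂^2 * P) :
    min (min ((1/2) * C (h₂^2 * P)) ((1/2) * Cplus (h₂^2 * P - 1/2)))
        ((1/2) * C (2 * h₂^2 * P)) = (1/2) * Cplus (h₂^2 * P - 1/2) ∧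
    |(1/2) * C (h₂^2 * P) - (1/2) * Cplus (h₂^2 * P - 1/2)| ≤ 1/4 := by
  rw [mul_assoc, Cplus_eq_C (by linarith)]
  set x := h₂^2 * P
  have hdouble : C (2 * x) = C (x - 1/2) + 1/2 := C_two_mul (by linarith)
  have hlower : C (x - 1/2) ≤ C x := C_le_C (by linarith) (by linarith)
  have hupper : C x ≤ C (2 * x) := C_le_C (by linarith) (by linarith)
  constructor
  · rw [min_eq_right (show (1/2) * C (x - 1/2) ≤ (1/2) * C x by linarith),
      min_eq_left (by linarith)]
  · rw [abs_of_nonneg (by linarith)]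
    linarith

theorem sim_scheme_half_phases (P h₂ h₃ : ℝ) (hP : 0 < P)
    (h2pos : 0 < h₂^2) (h3pos : 0 < h₃^2) (hord : h₂^2 ≤ h₃^2)
    (hsnr : 1/2 ≤ h₂^2 * P) :
    min (min ((1/2) * C (h₂^2 * P)) ((1/2) * Cplus (h₂^2 * P - 1/2)))
        ((1/2) * C (2 * h₂^2 * P)) = (1/2) * Cplus (h₂^2 * P - 1/2) ∧
    |(1/2) * C (h₂^2 * P) - (1/2) * Cplus (h₂^2 * P - 1/2)| ≤ 1/4 :=
  sim_scheme_half_phases_general P h₂ hsnr
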